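/- For every odd integer n > 3, let H_n be the bipartite cubic graph with vertex classes A = {a_0, …, a_{n−1}} and B = {b_0, …, b_{n−1}} whose edge set is the union of the three perfect matchings M_0, M_1, M_2, where M_j = {a_i b_{i+j} : 0 ≤ i ≤ n−1} with indices computed modulo n. Then m(H_n) = 4; moreover, the four subgraphs consisting of the edgeless spanning subgraph together with the three unions M_i ∪ M_j (0 ≤ i < j ≤ 2) form a connectivity code for H_n, since each union of two of the matchings M_i is a Hamilton cycle of H_n. -/

import Mathlib

open SimpleGraph

/-- A collection `𝒢` of spanning subgraphs of `H` is a *connectivity code* for `H` if the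
symmetric difference of any two distinct members of `𝒢` is a connected (spanning) subgraph
of `H`. -/
def IsConnCode {V : Type*} (H : SimpleGraph V) (𝒢 : Set (SimpleGraph V)) : Prop :=
  (∀ G ∈ 𝒢, G ≤ H) ∧
    ∀ G₁ ∈ 𝒢, ∀ G₂ ∈ 𝒢, G₁ ≠ G₂ → (symmDiff G₁ G₂).Connected

/-- `mCode H` is the maximum possible cardinality of a connectivity code for `H`. -/
noncomputable def mCode {V : Type*} [Fintype V] (H : SimpleGraph V) : ℕ :=
  sSup {n : ℕ | ∃ 𝒢 : Set (SimpleGraph V), IsConnCode H 𝒢 ∧ 𝒢.ncard = n}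

/-- The set of edges of `H` with one endpoint in `W` and the other in its complement. -/
def cutEdgeSet {V : Type*} (H : SimpleGraph V) (W : Set V) : Set (Sym2 V) :=
  {e | e ∈ H.edgeSet ∧ ∃ x ∈ W, ∃ y ∈ Wᶜ, e = s(x, y)}

/-- The edge-connectivity of `H`: the minimum number of edges whose deletion disconnects `H`. -/
noncomputable def edgeConn {V : Type*} [Fintype V] (H : SimpleGraph V) : ℕ :=
  sInf {n : ℕ | ∃ F : Set (Sym2 V), F ⊆ H.edgeSet ∧ F.ncard = n ∧
    ¬(H.deleteEdges F).Connected}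

/-- The perfect matching `M_j` on the vertex set `A ∪ B`, `A = {a_0, …, a_{n-1}}`
(coded `(false, i)`), `B = {b_0, …, b_{n-1}}` (coded `(true, i)`), consisting of the edges
`a_i b_{i+j}` with indices mod `n`. -/
def bipMatching (n j : ℕ) : SimpleGraph (Bool × Fin n) :=
  SimpleGraph.fromRel (fun p q =>
    p.1 = false ∧ q.1 = true ∧ (q.2 : ℕ) = ((p.2 : ℕ) + j) % n)

/-- The cubic bipartite graph `H_n`: the union of the three matchings `M_0, M_1, M_2`. -/
def cubicBip (n : ℕ) : SimpleGraph (Bool × Fin n) :=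
  bipMatching n 0 ⊔ bipMatching n 1 ⊔ bipMatching n 2

/-!
A connected spanning subgraph of `H_n` has at least `2n - 1` edges, hence at least `2n` if it
has an even number of them. Among five codewords two have edge sets of equal parity, so their
symmetric difference is even; summing over the 20 ordered pairs of distinct codewords gives at
least `20 (2n - 1) + 1` edges. Double counting bounds that sum by `12 |E(H_n)| = 36 n`, since an
edge lying in `t` of the five codewords lies in `2 t (5 - t) ≤ 12` of the symmetric
differences. This is impossible once `n ≥ 5`.

Conversely, the three matchings are pairwise edge-disjoint, so the symmetric difference of two of
the unions `M_i ∪ M_j` is the third one. The walk `a_k, b_{k+j}, a_{k+j-i}` moves along `A` by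
`j - i`, which generates `ℤ/n` when `gcd (j - i, n) = 1`: for `j - i = 2` this is where `n` odd
is needed.
-/

open Finset
open scoped symmDiff

namespace Finset

variable {α : Type*} [DecidableEq α]

lemma card_symmDiff_add_two_mul_card_inter (s t : Finset α) :
    #(s ∆ t) + 2 * #(s ∩ t) = #s + #t := by
  have hs := card_sdiff_add_card_inter s t
  have ht := card_sdiff_add_card_inter t s
  rw [symmDiff_def, sup_eq_union, card_union_of_disjoint disjoint_sdiff_sdiff]
  rw [inter_comm] at ht
  omega

lemma even_card_symmDiff_iff (s t : Finset α) : Even #(s ∆ t) ↔ (Even #s ↔ Even #t) := by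
  rw [← Nat.even_add, ← card_symmDiff_add_two_mul_card_inter]
  simp [Nat.even_add]

lemma exists_ne_even_card_symmDiff {ι : Type*} [Fintype ι] (hι : 2 < Fintype.card ι)
    (C : ι → Finset α) : ∃ i j, i ≠ j ∧ Even #(C i ∆ C j) := by
  obtain ⟨i, j, hij, h⟩ :=
    Fintype.exists_ne_map_eq_of_card_lt (fun i => decide (Even #(C i))) (by simpa using hι)
  exact ⟨i, j, hij, (even_card_symmDiff_iff _ _).2 (by simpa using h)⟩

lemma card_filter_mem_symmDiff {ι : Type*} [Fintype ι] [DecidableEq ι] (C : ι → Finset α)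
    (a : α) :
    #{p : ι × ι | a ∈ C p.1 ∆ C p.2} = 2 * (#{i | a ∈ C i} * #{i | a ∉ C i}) := by
  set T : Finset ι := {i | a ∈ C i}
  set U : Finset ι := {i | a ∉ C i}
  have hsplit : ({p : ι × ι | a ∈ C p.1 ∆ C p.2} : Finset (ι × ι)) = T ×ˢ U ∪ U ×ˢ T := by
    ext p
    simp only [mem_filter, mem_univ, true_and, mem_union, mem_product, mem_symmDiff, T, U]
    tauto
  rw [hsplit, card_union_of_disjoint, card_product, card_product]
  · ring
  · refine disjoint_left.2 fun p h₁ h₂ => ?_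
    simp only [mem_product, mem_filter, mem_univ, true_and, T, U] at h₁ h₂
    exact h₂.1 h₁.1

lemma sum_card_symmDiff_le {ι : Type*} [Fintype ι] [DecidableEq ι] {E : Finset α}
    {C : ι → Finset α} (hC : ∀ i, C i ⊆ E) :
    ∑ p : ι × ι, #(C p.1 ∆ C p.2) ≤ Fintype.card ι ^ 2 / 2 * #E := by
  have hsub (p : ι × ι) : C p.1 ∆ C p.2 ⊆ E :=
    symmDiff_le_sup.trans (union_subset (hC _) (hC _))
  calc ∑ p : ι × ι, #(C p.1 ∆ C p.2)
      = ∑ p : ι × ι, #{a ∈ E | a ∈ C p.1 ∆ C p.2} := by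
        simp_rw [filter_mem_eq_inter, inter_eq_right.2 (hsub _)]
    _ = ∑ a ∈ E, #{p : ι × ι | a ∈ C p.1 ∆ C p.2} :=
        sum_card_bipartiteAbove_eq_sum_card_bipartiteBelow _
    _ ≤ ∑ _a ∈ E, Fintype.card ι ^ 2 / 2 := sum_le_sum fun a _ => by
        rw [card_filter_mem_symmDiff, ← card_univ,
          ← card_filter_add_card_filter_not (s := univ) (fun i => a ∈ C i)]
        generalize #{i | a ∈ C i} = t
        generalize #{i | a ∉ C i} = u
        exact (Nat.le_div_iff_mul_le two_pos).2 (by nlinarith [sq_nonneg ((t : ℤ) - u)])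
    _ = _ := by rw [sum_const, smul_eq_mul, mul_comm]

lemma twenty_mul_add_one_le_twelve_mul_card {E : Finset α} {C : Fin 5 → Finset α}
    (hC : ∀ i, C i ⊆ E) {d : ℕ} (hd : Odd d) (hdist : ∀ i j, i ≠ j → d ≤ #(C i ∆ C j)) :
    20 * d + 1 ≤ 12 * #E := by
  set f : Fin 5 × Fin 5 → ℕ := fun p => #(C p.1 ∆ C p.2)
  set D := (univ : Finset (Fin 5)).offDiag
  obtain ⟨i, j, hij, heven⟩ := exists_ne_even_card_symmDiff (by simp) C
  have hij_mem : (i, j) ∈ D := by simpa [D] using hij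
  have hfar : d + 1 ≤ f (i, j) :=
    (hdist i j hij).lt_of_ne fun h => Nat.not_even_iff_odd.2 hd (h ▸ heven)
  have hrest : 19 * d ≤ ∑ p ∈ D.erase (i, j), f p := by
    have := card_nsmul_le_sum (D.erase (i, j)) f d fun p hp => by
      obtain ⟨-, -, hne⟩ := mem_offDiag.1 (mem_of_mem_erase hp)
      exact hdist _ _ hne
    rwa [card_erase_of_mem hij_mem, offDiag_card, smul_eq_mul] at this
  calc 20 * d + 1 ≤ f (i, j) + ∑ p ∈ D.erase (i, j), f p := by omega
    _ = ∑ p ∈ D, f p := add_sum_erase _ _ hij_mem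
    _ ≤ ∑ p : Fin 5 × Fin 5, f p := sum_le_sum_of_subset (subset_univ _)
    _ ≤ 12 * #E := sum_card_symmDiff_le hC

end Finset

section GeneralizedBooleanAlgebra

variable {α : Type*} [GeneralizedBooleanAlgebra α] {a b c : α}

lemma symmDiff_sup_sup_of_disjoint (hab : Disjoint a b) (hac : Disjoint a c)
    (hbc : Disjoint b c) : (a ⊔ b) ∆ (a ⊔ c) = b ⊔ c := by
  rw [← hab.symmDiff_eq_sup, ← hac.symmDiff_eq_sup, ← hbc.symmDiff_eq_sup,
    symmDiff_symmDiff_symmDiff_comm, symmDiff_self, bot_symmDiff]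

lemma ncard_bot_sup_pairs_eq_four (hab : Disjoint a b) (hac : Disjoint a c)
    (hbc : Disjoint b c) (ha : a ≠ ⊥) (hb : b ≠ ⊥) :
    ({⊥, a ⊔ b, a ⊔ c, b ⊔ c} : Set α).ncard = 4 := by
  have hab_ac : a ⊔ b ≠ a ⊔ c := mt symmDiff_eq_bot.2 <| by
    rw [symmDiff_sup_sup_of_disjoint hab hac hbc]
    exact ne_bot_of_le_ne_bot hb le_sup_left
  have hab_bc : a ⊔ b ≠ b ⊔ c := mt symmDiff_eq_bot.2 <| by
    rw [sup_comm a, symmDiff_sup_sup_of_disjoint hab.symm hbc hac]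
    exact ne_bot_of_le_ne_bot ha le_sup_left
  have hac_bc : a ⊔ c ≠ b ⊔ c := mt symmDiff_eq_bot.2 <| by
    rw [sup_comm a, sup_comm b, symmDiff_sup_sup_of_disjoint hac.symm hbc.symm hab]
    exact ne_bot_of_le_ne_bot ha le_sup_left
  have hbot (x y : α) (hx : x ≠ ⊥) : ⊥ ≠ x ⊔ y := (ne_bot_of_le_ne_bot hx le_sup_left).symm
  rw [Set.ncard_insert_of_notMem, Set.ncard_insert_of_notMem, Set.ncard_pair hac_bc]
  · simp [hab_ac, hab_bc]
  · simp [hbot a b ha, hbot a c ha, hbot b c hb]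

end GeneralizedBooleanAlgebra

namespace SimpleGraph

variable {V : Type*}

lemma edgeSet_symmDiff (G₁ G₂ : SimpleGraph V) :
    (G₁ ∆ G₂).edgeSet = G₁.edgeSet ∆ G₂.edgeSet := by
  simp only [symmDiff_def, edgeSet_sup, edgeSet_sdiff]
  rfl

lemma edgeFinset_symmDiff [Fintype V] [DecidableEq V] (G₁ G₂ : SimpleGraph V)
    [DecidableRel G₁.Adj] [DecidableRel G₂.Adj] [DecidableRel (G₁ ∆ G₂).Adj] :
    (G₁ ∆ G₂).edgeFinset = G₁.edgeFinset ∆ G₂.edgeFinset := by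
  ext e
  simp only [mem_edgeFinset, edgeSet_symmDiff, Set.mem_symmDiff, Finset.mem_symmDiff]

end SimpleGraph

theorem IsConnCode.ncard_le_four {V : Type*} [Fintype V] {H : SimpleGraph V}
    {𝒢 : Set (SimpleGraph V)} (h𝒢 : IsConnCode H 𝒢) (hV : Even (Fintype.card V))
    (hE : 12 * H.edgeSet.ncard + 19 < 20 * Fintype.card V) : 𝒢.ncard ≤ 4 := by
  classical
  by_contra! h5
  have : Fintype 𝒢 := Fintype.ofFinite 𝒢
  obtain ⟨c⟩ : Nonempty (Fin 5 ↪ 𝒢) := Function.Embedding.nonempty_of_card_le <| by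
    rw [Fintype.card_fin, ← Nat.card_eq_fintype_card, Nat.card_coe_set_eq]
    exact h5
  set C : Fin 5 → Finset (Sym2 V) := fun i => (c i : SimpleGraph V).edgeFinset
  have hCE (i : Fin 5) : C i ⊆ H.edgeFinset := edgeFinset_mono (h𝒢.1 _ (c i).2)
  have hdist (i j : Fin 5) (hij : i ≠ j) : Fintype.card V - 1 ≤ #(C i ∆ C j) := by
    have hconn := h𝒢.2 _ (c i).2 _ (c j).2 fun h => hij (c.injective (Subtype.ext h))
    have := hconn.card_vert_le_card_edgeSet_add_one
    rw [Nat.card_eq_fintype_card, Nat.card_eq_fintype_card, ← edgeFinset_card,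
      edgeFinset_symmDiff] at this
    exact Nat.sub_le_of_le_add this
  have hodd : Odd (Fintype.card V - 1) := Nat.Even.sub_odd (by omega) hV odd_one
  have := twenty_mul_add_one_le_twelve_mul_card hCE hodd hdist
  rw [← Set.ncard_coe_finset, coe_edgeFinset] at this
  omega

lemma isConnCode_bot_sup_pairs {V : Type*} {H A B C : SimpleGraph V} (hAB : Disjoint A B)
    (hAC : Disjoint A C) (hBC : Disjoint B C) (hle : A ⊔ B ⊔ C ≤ H)
    (cAB : (A ⊔ B).Connected) (cAC : (A ⊔ C).Connected) (cBC : (B ⊔ C).Connected) :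
    IsConnCode H {⊥, A ⊔ B, A ⊔ C, B ⊔ C} := by
  have s₁ : (A ⊔ B) ∆ (A ⊔ C) = B ⊔ C := symmDiff_sup_sup_of_disjoint hAB hAC hBC
  have s₂ : (A ⊔ B) ∆ (B ⊔ C) = A ⊔ C := by
    rw [sup_comm A]; exact symmDiff_sup_sup_of_disjoint hAB.symm hBC hAC
  have s₃ : (A ⊔ C) ∆ (B ⊔ C) = A ⊔ B := by
    rw [sup_comm A C, sup_comm B C]
    exact symmDiff_sup_sup_of_disjoint hAC.symm hBC.symm hAB
  refine ⟨?_, ?_⟩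
  · rintro G (rfl | rfl | rfl | rfl)
    · exact bot_le
    · exact le_sup_left.trans hle
    · exact (sup_le_sup_right le_sup_left C).trans hle
    · exact (sup_le_sup_right le_sup_right C).trans hle
  · rintro G₁ (rfl | rfl | rfl | rfl) G₂ (rfl | rfl | rfl | rfl) hne <;>
      simp only [ne_eq, not_true_eq_false] at hne <;>
      simp only [bot_symmDiff, symmDiff_bot, s₁, s₂, s₃, symmDiff_comm (B ⊔ C),
        symmDiff_comm (A ⊔ C) (A ⊔ B)] <;>
      assumption

section

open Fin.CommRing

lemma Fin.natCast_eq_natCast_iff_modEq {n : ℕ} [NeZero n] {i j : ℕ} :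
    (i : Fin n) = j ↔ i ≡ j [MOD n] := by
  simp [Fin.ext_iff, Fin.val_natCast, Nat.ModEq]

lemma Fin.exists_mul_natCast_eq_one_of_coprime {n m : ℕ} [NeZero n] (h : m.Coprime n) :
    ∃ u : Fin n, u * m = 1 := by
  refine ⟨(m.gcdA n : Fin n), ?_⟩
  have hbezout := congrArg (Int.cast : ℤ → Fin n) (Nat.gcd_eq_gcd_ab m n)
  push_cast [h.gcd_eq_one, Fin.natCast_self] at hbezout
  linear_combination -hbezout

variable {n : ℕ}

@[simp]
lemma bipMatching_not_adj_same_side {j : ℕ} (b : Bool) (k l : Fin n) :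
    ¬ (bipMatching n j).Adj (b, k) (b, l) := by
  cases b <;> simp [bipMatching]

variable [NeZero n]

@[simp]
lemma bipMatching_adj_false_true {j : ℕ} {k l : Fin n} :
    (bipMatching n j).Adj (false, k) (true, l) ↔ l = k + j := by
  rw [bipMatching, fromRel_adj]
  simp [Fin.ext_iff, Fin.val_add, Fin.val_natCast]

@[simp]
lemma bipMatching_adj_true_false {j : ℕ} {k l : Fin n} :
    (bipMatching n j).Adj (true, l) (false, k) ↔ l = k + j := by
  rw [adj_comm, bipMatching_adj_false_true]

lemma bipMatching_ne_bot {j : ℕ} : bipMatching n j ≠ ⊥ := fun h => by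
  simpa [h] using (bipMatching_adj_false_true (k := 0) (l := (j : Fin n))).2 (zero_add _).symm

lemma neighborSet_bipMatching_false (j : ℕ) (k : Fin n) :
    (bipMatching n j).neighborSet (false, k) = {(true, k + j)} := by
  ext ⟨_ | _, l⟩ <;> simp

lemma neighborSet_bipMatching_true (j : ℕ) (l : Fin n) :
    (bipMatching n j).neighborSet (true, l) = {(false, l - j)} := by
  ext ⟨_ | _, k⟩ <;> simp [eq_sub_iff_add_eq, eq_comm]

lemma ncard_neighborSet_bipMatching_sup {i j : ℕ} (hij : ¬ i ≡ j [MOD n])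
    (v : Bool × Fin n) : ((bipMatching n i ⊔ bipMatching n j).neighborSet v).ncard = 2 := by
  rw [← Fin.natCast_eq_natCast_iff_modEq] at hij
  obtain ⟨_ | _, k⟩ := v
  · rw [neighborSet_sup, neighborSet_bipMatching_false, neighborSet_bipMatching_false,
      Set.singleton_union]
    exact Set.ncard_pair (by simpa using hij)
  · rw [neighborSet_sup, neighborSet_bipMatching_true, neighborSet_bipMatching_true,
      Set.singleton_union]
    exact Set.ncard_pair (by simpa using hij)

lemma disjoint_bipMatching {i j : ℕ} (hij : ¬ i ≡ j [MOD n]) :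
    Disjoint (bipMatching n i) (bipMatching n j) := by
  rw [← Fin.natCast_eq_natCast_iff_modEq] at hij
  refine disjoint_neighborSet.1 fun ⟨b, k⟩ => ?_
  cases b
  · simpa [neighborSet_bipMatching_false] using hij
  · simpa [neighborSet_bipMatching_true] using hij

lemma bipMatching_sup_connected {i j : ℕ} (hij : i ≤ j) (hcop : (j - i).Coprime n) :
    (bipMatching n i ⊔ bipMatching n j).Connected := by
  set G := bipMatching n i ⊔ bipMatching n j
  set d : Fin n := ((j - i : ℕ) : Fin n)
  have hstep (k : Fin n) : G.Reachable (false, k) (false, k + d) := by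
    have h₁ : G.Adj (false, k) (true, k + j) := Or.inr (by simp)
    have h₂ : G.Adj (false, k + d) (true, k + j) :=
      Or.inl (by simp only [bipMatching_adj_false_true, d, Nat.cast_sub hij]; ring)
    exact h₁.reachable.trans h₂.reachable.symm
  have hiter (m : ℕ) (k : Fin n) : G.Reachable (false, k) (false, k + m * d) := by
    induction m with
    | zero => simp
    | succ m ih => simpa [add_mul, add_assoc] using ih.trans (hstep (k + m * d))
  obtain ⟨u, hu⟩ : ∃ u, u * d = 1 := Fin.exists_mul_natCast_eq_one_of_coprime hcop
  have hfalse (k : Fin n) : G.Reachable (false, 0) (false, k) := by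
    simpa [mul_assoc, hu] using hiter (k * u).val 0
  have hall : ∀ v, G.Reachable (false, 0) v := by
    rintro ⟨_ | _, k⟩
    · exact hfalse k
    · exact (hfalse (k - i)).trans (Adj.reachable (Or.inl (by simp)))
  exact (connected_iff_exists_forall_reachable _).2 ⟨_, hall⟩

lemma ncard_edgeSet_bipMatching_le (j : ℕ) : (bipMatching n j).edgeSet.ncard ≤ n := by
  have hsub : (bipMatching n j).edgeSet ⊆
      Set.range fun k : Fin n => s((false, k), (true, k + j)) := by
    intro e he
    induction e using Sym2.ind with
    | h v w =>
      obtain ⟨_ | _, k⟩ := v <;> obtain ⟨_ | _, l⟩ := w <;>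
        simp only [mem_edgeSet, bipMatching_not_adj_same_side, bipMatching_adj_false_true,
          bipMatching_adj_true_false] at he
      · exact ⟨k, by rw [he]⟩
      · exact ⟨l, by rw [he, Sym2.eq_swap]⟩
  calc _ ≤ _ := Set.ncard_le_ncard hsub (Set.toFinite _)
    _ ≤ (Set.univ : Set (Fin n)).ncard := by
      rw [← Set.image_univ]; exact Set.ncard_image_le (Set.toFinite _)
    _ = n := by simp

lemma ncard_edgeSet_cubicBip_le : (cubicBip n).edgeSet.ncard ≤ 3 * n := by
  have h₀ := ncard_edgeSet_bipMatching_le (n := n) 0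
  have h₁ := ncard_edgeSet_bipMatching_le (n := n) 1
  have h₂ := ncard_edgeSet_bipMatching_le (n := n) 2
  rw [cubicBip, edgeSet_sup, edgeSet_sup]
  grw [Set.ncard_union_le, Set.ncard_union_le]
  omega

end

/-- For every odd `n > 3`, `m(H_n) = 4`; moreover the four subgraphs consisting of the
edgeless spanning subgraph together with the three unions `M_i ∪ M_j`, `0 ≤ i < j ≤ 2`, form
a connectivity code for `H_n`, and each union of two of the matchings is a Hamilton cycle
of `H_n` (a connected spanning `2`-regular subgraph). -/
theorem stmt15 (n : ℕ) (hodd : Odd n) (hn : 3 < n) :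
    mCode (cubicBip n) = 4 ∧
    IsConnCode (cubicBip n)
      {⊥, bipMatching n 0 ⊔ bipMatching n 1, bipMatching n 0 ⊔ bipMatching n 2,
        bipMatching n 1 ⊔ bipMatching n 2} ∧
    (∀ i j : ℕ, i < j → j ≤ 2 →
      (bipMatching n i ⊔ bipMatching n j).Connected ∧
      ∀ v : Bool × Fin n,
        ((bipMatching n i ⊔ bipMatching n j).neighborSet v).ncard = 2) := by
  have : NeZero n := ⟨by omega⟩
  have hmod (i j : ℕ) (hij : i < j) (hj : j ≤ 2) : ¬ i ≡ j [MOD n] := fun h =>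
    hij.ne (h.eq_of_lt_of_lt (by omega) (by omega))
  have hdisj (i j : ℕ) (hij : i < j) (hj : j ≤ 2) :
      Disjoint (bipMatching n i) (bipMatching n j) :=
    disjoint_bipMatching (hmod i j hij hj)
  have hconn (i j : ℕ) (hij : i < j) (hj : j ≤ 2) :
      (bipMatching n i ⊔ bipMatching n j).Connected := by
    refine bipMatching_sup_connected hij.le ?_
    interval_cases j <;> interval_cases i <;> simp [hodd]
  have h01 := hdisj 0 1 one_pos one_le_two
  have h02 := hdisj 0 2 two_pos le_rfl
  have h12 := hdisj 1 2 one_lt_two le_rfl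
  have hcode := isConnCode_bot_sup_pairs h01 h02 h12 le_rfl
    (hconn 0 1 one_pos one_le_two) (hconn 0 2 two_pos le_rfl) (hconn 1 2 one_lt_two le_rfl)
  refine ⟨?_, hcode, fun i j hij hj =>
    ⟨hconn i j hij hj, ncard_neighborSet_bipMatching_sup (hmod i j hij hj)⟩⟩
  refine IsGreatest.csSup_eq ⟨⟨_, hcode,
    ncard_bot_sup_pairs_eq_four h01 h02 h12 bipMatching_ne_bot bipMatching_ne_bot⟩, ?_⟩
  rintro m ⟨𝒢, h𝒢, rfl⟩
  have hE := ncard_edgeSet_cubicBip_le (n := n)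
  have h5 : 5 ≤ n := by obtain ⟨r, rfl⟩ := hodd; omega
  have hV : Fintype.card (Bool × Fin n) = 2 * n := by
    rw [Fintype.card_prod, Fintype.card_bool, Fintype.card_fin]
  exact h𝒢.ncard_le_four (hV ▸ even_two_mul n) (by omega)
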